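/- arXiv:2307.07107 — 2 statements merged into one kernel-verified Lean document; each statement's English description precedes it below -/
import Mathlib

section
/- Let G be a finite simple graph and (i,j) an edge of G. Then γ_max is unchanged by adding a virtual node: γ_max_{G^{+VN}}(i,j) = γ_max_G(i,j). -/
open Finset

attribute [local instance] Classical.propDecidable

variable {V : Type*} [Fintype V] [DecidableEq V]

/-- The virtual-node graph `G^{+VN}`: vertex set `V ∪ {v*}` (here `Option V`, with `none`
playing the role of the virtual node `v*`), original adjacency on `V`, and the virtual
node adjacent to every original vertex. -/
def addVN (G : SimpleGraph V) : SimpleGraph (Option V) where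
  Adj u v :=
    match u, v with
    | some a, some b => G.Adj a b
    | some _, none => True
    | none, some _ => True
    | none, none => False
  symm := by
    constructor
    intro u v h
    cases u <;> cases v <;> simp_all
    exact h.symm
  loopless := by
    constructor
    intro u h
    cases u <;> simp_all

/-- `#Δ(i,j)`: number of triangles containing the edge `(i,j)`, i.e. common neighbors. -/
noncomputable def triCount (G : SimpleGraph V) (i j : V) : ℕ :=
  (G.neighborFinset i ∩ G.neighborFinset j).card

/-- `#□^i(i,j)`: number of diagonal-free 4-cycles based at the edge `(i,j)`, seen from `i`. -/
noncomputable def sqCount (G : SimpleGraph V) (i j : V) : ℕ :=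
  ((G.neighborFinset i).filter (fun k => k ≠ j ∧ ¬ G.Adj k j ∧
    ∃ w, G.Adj w k ∧ G.Adj w j ∧ w ≠ i ∧ ¬ G.Adj w i)).card

/-- The diagonal-free 4-cycles based at the edge `(i,j)`, as pairs `(k, w)`. -/
noncomputable def fourCycles (G : SimpleGraph V) (i j : V) : Finset (V × V) :=
  Finset.univ.filter (fun p => G.Adj i p.1 ∧ p.1 ≠ j ∧ ¬ G.Adj p.1 j ∧
    G.Adj p.2 p.1 ∧ G.Adj p.2 j ∧ p.2 ≠ i ∧ ¬ G.Adj p.2 i)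

/-- `γ_max(i,j)`: maximum over nodes `k` of the number of diagonal-free 4-cycles based at
`(i,j)` passing through `k`. -/
noncomputable def gammaMax (G : SimpleGraph V) (i j : V) : ℕ :=
  Finset.univ.sup (fun x => ((fourCycles G i j).filter (fun p => p.1 = x ∨ p.2 = x)).card)

/-- The balanced Forman curvature of the edge `(i,j)`. -/
noncomputable def Ric (G : SimpleGraph V) (i j : V) : ℝ :=
  2 / (G.degree i : ℝ) + 2 / (G.degree j : ℝ) - 2
    + (triCount G i j : ℝ) *
        (2 / (max (G.degree i) (G.degree j) : ℝ) + 1 / (min (G.degree i) (G.degree j) : ℝ))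
    + ((gammaMax G i j : ℝ) / (max (G.degree i) (G.degree j) : ℝ)) *
        ((sqCount G i j : ℝ) + (sqCount G j i : ℝ))

/-- The triangle-only balanced Forman curvature `Ric₀` of the edge `(i,j)`. -/
noncomputable def Ric₀ (G : SimpleGraph V) (i j : V) : ℝ :=
  2 / (G.degree i : ℝ) + 2 / (G.degree j : ℝ) - 2
    + (triCount G i j : ℝ) *
        (2 / (max (G.degree i) (G.degree j) : ℝ) + 1 / (min (G.degree i) (G.degree j) : ℝ))

lemma Finset.sup_univ_option {α β : Type*} [Fintype α] [SemilatticeSup β] [OrderBot β]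
    (f : Option α → β) : univ.sup f = f none ⊔ univ.sup (f ∘ some) :=
  (Finset.sup_cons (by simp)).trans (congrArg _ (Finset.sup_map _ _ _))

noncomputable def throughCount (G : SimpleGraph V) (i j x : V) : ℕ :=
  ((fourCycles G i j).filter (fun p => p.1 = x ∨ p.2 = x)).card

lemma gammaMax_eq_sup_throughCount (G : SimpleGraph V) (i j : V) :
    gammaMax G i j = Finset.univ.sup (throughCount G i j) :=
  rfl

lemma throughCount_eq_zero_of_adj_of_adj (G : SimpleGraph V) {i j x : V}
    (hxi : G.Adj x i) (hxj : G.Adj x j) : throughCount G i j x = 0 := by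
  refine Finset.card_eq_zero.2 (Finset.filter_false_of_mem fun p hp hx => ?_)
  simp only [fourCycles, Finset.mem_filter, Finset.mem_univ, true_and] at hp
  rcases hx with rfl | rfl
  · exact hp.2.2.1 hxj
  · exact hp.2.2.2.2.2.2 hxi

omit [Fintype V] [DecidableEq V] in
lemma addVN_adj_none_some (G : SimpleGraph V) (a : V) : (addVN G).Adj none (some a) :=
  trivial

lemma fourCycles_addVN (G : SimpleGraph V) (i j : V) :
    fourCycles (addVN G) (some i) (some j) =
      (fourCycles G i j).map (Function.Embedding.some.prodMap Function.Embedding.some) := by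
  ext ⟨k, w⟩
  simp only [fourCycles, Finset.mem_map, Finset.mem_filter, Finset.mem_univ, true_and,
    Prod.exists, Function.Embedding.coe_prodMap, Prod.map_apply, Function.Embedding.some_apply,
    Prod.mk.injEq]
  constructor
  · rintro ⟨h1, h2, h3, h4, h5, h6, h7⟩
    -- the virtual node is adjacent to both `i` and `j`, so it is neither `k` nor `w`
    cases k with
    | none => exact absurd (addVN_adj_none_some G j) h3
    | some k =>
    cases w with
    | none => exact absurd (addVN_adj_none_some G i) h7
    | some w => exact ⟨k, w, ⟨h1, by simpa using h2, h3, h4, h5, by simpa using h6, h7⟩, rfl, rfl⟩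
  · rintro ⟨k, w, ⟨h1, h2, h3, h4, h5, h6, h7⟩, rfl, rfl⟩
    exact ⟨h1, by simpa using h2, h3, h4, h5, by simpa using h6, h7⟩

lemma throughCount_addVN_some (G : SimpleGraph V) (i j a : V) :
    throughCount (addVN G) (some i) (some j) (some a) = throughCount G i j a := by
  simp [throughCount, fourCycles_addVN, Finset.filter_map]

lemma throughCount_addVN_none (G : SimpleGraph V) (i j : V) :
    throughCount (addVN G) (some i) (some j) none = 0 :=
  throughCount_eq_zero_of_adj_of_adj _ (addVN_adj_none_some G i) (addVN_adj_none_some G j)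

theorem stmt_5_general (G : SimpleGraph V) (i j : V) :
    gammaMax (addVN G) (some i) (some j) = gammaMax G i j := by
  rw [gammaMax_eq_sup_throughCount, gammaMax_eq_sup_throughCount, Finset.sup_univ_option,
    throughCount_addVN_none, zero_max]
  exact congrArg _ (funext (throughCount_addVN_some G i j))

/-- For an edge `(i,j)` of `G`, the quantity `γ_max` is unchanged by
adding a virtual node. -/
theorem stmt_5 (G : SimpleGraph V) (i j : V) (hij : G.Adj i j) :
    gammaMax (addVN G) (some i) (some j) = gammaMax G i j :=
  stmt_5_general G i j
end

section
/- Let G be a finite simple graph and (i,j) an edge such that the degree of j equals 1. Then i and j have no common neighbor, #□^i(i,j) = #□^j(i,j) = 0, and the balanced Forman curvature satisfies Ric(i,j) = 2/d_i > 0; in particular, pendant edges never have negative curvature. -/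
open Finset

attribute [local instance] Classical.propDecidable

variable {V : Type*} [Fintype V] [DecidableEq V]

/-! If `i` is the only neighbour of `j`, then a common neighbour of `i` and `j`, or a
diagonal-free 4-cycle through the edge `(i,j)`, would need a second neighbour of `j`.
Hence only the degree terms of `Ric(i,j)` survive, and `d_j = 1` leaves `2/d_i`. -/

lemma neighborSet_subset_singleton_of_degree_eq_one {W : Type*} {G : SimpleGraph W} {i j : W}
    [Fintype (G.neighborSet j)] (hij : G.Adj i j) (hdj : G.degree j = 1) :
    G.neighborSet j ⊆ {i} :=
  fun _ hjw => (SimpleGraph.degree_eq_one_iff_existsUnique_adj.mp hdj).unique hjw hij.symm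

lemma triCount_eq_zero_of_neighborSet_subset {G : SimpleGraph V} {i j : V}
    (hj : G.neighborSet j ⊆ {i}) : triCount G i j = 0 := by
  refine Finset.card_eq_zero.mpr (Finset.eq_empty_of_forall_notMem fun k hk => ?_)
  simp only [Finset.mem_inter, SimpleGraph.mem_neighborFinset] at hk
  exact G.loopless.irrefl i (hj hk.2 ▸ hk.1)

lemma sqCount_eq_zero_of_neighborSet_subset {G : SimpleGraph V} {i j : V}
    (hj : G.neighborSet j ⊆ {i}) : sqCount G i j = 0 := by
  refine Finset.card_eq_zero.mpr (Finset.filter_eq_empty_iff.mpr ?_)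
  rintro k - ⟨-, -, w, -, hwj, hwi, -⟩
  exact hwi (hj hwj.symm)

lemma sqCount_swap_eq_zero_of_neighborSet_subset {G : SimpleGraph V} {i j : V}
    (hj : G.neighborSet j ⊆ {i}) : sqCount G j i = 0 := by
  refine Finset.card_eq_zero.mpr (Finset.filter_eq_empty_iff.mpr ?_)
  rintro k hjk ⟨hki, -⟩
  exact hki (hj ((G.mem_neighborFinset j k).mp hjk))

lemma Ric_eq_of_triCount_eq_zero_of_sqCount_eq_zero {G : SimpleGraph V} {i j : V}
    (htri : triCount G i j = 0) (hsq : sqCount G i j = 0) (hsq' : sqCount G j i = 0) :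
    Ric G i j = 2 / (G.degree i : ℝ) + 2 / (G.degree j : ℝ) - 2 := by
  simp [Ric, htri, hsq, hsq']

/-- For a pendant edge `(i,j)` (i.e. `d_j = 1`): `i` and `j` have no
common neighbor, both diagonal-free 4-cycle counts vanish, and
`Ric(i,j) = 2/d_i > 0`; pendant edges never have negative curvature. -/
theorem stmt_10 (G : SimpleGraph V) (i j : V) (hij : G.Adj i j)
    (hdj : G.degree j = 1) :
    triCount G i j = 0 ∧ sqCount G i j = 0 ∧ sqCount G j i = 0 ∧
    Ric G i j = 2 / (G.degree i : ℝ) ∧ 0 < Ric G i j := by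
  have hj := neighborSet_subset_singleton_of_degree_eq_one hij hdj
  have htri := triCount_eq_zero_of_neighborSet_subset hj
  have hsq := sqCount_eq_zero_of_neighborSet_subset hj
  have hsq' := sqCount_swap_eq_zero_of_neighborSet_subset hj
  have hRic : Ric G i j = 2 / (G.degree i : ℝ) := by
    rw [Ric_eq_of_triCount_eq_zero_of_sqCount_eq_zero htri hsq hsq', hdj]
    norm_num
  have hdi : 0 < G.degree i := G.degree_pos_iff_exists_adj i |>.mpr ⟨j, hij⟩
  exact ⟨htri, hsq, hsq', hRic, hRic ▸ by positivity⟩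
end
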